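/- Let G₉ be the semidirect product V ⋊ GL(2, F₃), where V = F₃² is the natural 2-dimensional module for GL(2, F₃) over the field with 3 elements. Then G₉ has order 432 and derived length exactly 5 (hence composition length Ω(432) = 7). -/

import Mathlib

/-- `Omega n` is the number of prime factors of `n` counted with multiplicity,
usually denoted `Ω(n)`.  For a finite solvable group `G`, `Omega (Nat.card G)`
is the composition length of `G`. -/
def Omega (n : ℕ) : ℕ := n.primeFactorsList.length

/-- `DerivedLengthEq G d` says that the derived (solvable) length of `G` is exactly `d`:
the `d`-th term of the derived series is trivial and no earlier term is trivial. -/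
def DerivedLengthEq (G : Type*) [Group G] (d : ℕ) : Prop :=
  derivedSeries G d = ⊥ ∧ ∀ k < d, derivedSeries G k ≠ ⊥

/-- The natural action of `GL(2, F₃)` on its natural module `V = F₃²` (written
multiplicatively, so that it can be used to form a `SemidirectProduct`): `g` acts on a
column vector `v` by matrix-vector multiplication. -/
def glAction : GL (Fin 2) (ZMod 3) →* MulAut (Multiplicative (Fin 2 → ZMod 3)) where
  toFun g :=
    { toFun := fun v => Multiplicative.ofAdd (g.val.mulVec v.toAdd)
      invFun := fun v => Multiplicative.ofAdd ((g⁻¹).val.mulVec v.toAdd)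
      left_inv := fun v => by
        simp only [toAdd_ofAdd]
        rw [Matrix.mulVec_mulVec, ← Units.val_mul, inv_mul_cancel,
          Units.val_one, Matrix.one_mulVec]
        rfl
      right_inv := fun v => by
        simp only [toAdd_ofAdd]
        rw [Matrix.mulVec_mulVec, ← Units.val_mul, mul_inv_cancel,
          Units.val_one, Matrix.one_mulVec]
        rfl
      map_mul' := fun v w => by
        simp only [toAdd_mul, Matrix.mulVec_add, ofAdd_add] }
  map_one' := by
    ext v
    simp [Matrix.one_mulVec]
  map_mul' g h := by
    ext v i
    fin_cases i <;> simp [Matrix.mul_apply, Fin.sum_univ_two] <;> ring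

/-- `G₉ = F₃² ⋊ GL(2, F₃)`, the semidirect product of the natural module with
`GL(2, F₃)`. -/
abbrev G₉ : Type := (Multiplicative (Fin 2 → ZMod 3)) ⋊[glAction] (GL (Fin 2) (ZMod 3))

/-! The derived series of `GL(2, 𝔽₃)` is `GL ⊳ SL ⊳ Q₈ ⊳ {±1} ⊳ 1`, so `D⁴(G₉)` lies in the abelian
kernel `V` of the projection `G₉ → GL(2, 𝔽₃)` and `D⁵(G₉) = 1`. Conversely `-1 ∈ D³(GL(2, 𝔽₃))` acts
on `V` as `v ↦ -v`, so `⁅v, -1⁆ = 2v`; since `2` is invertible mod 3, taking commutators with `-1`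
reproduces all of `V` at each step, whence `1 ≠ V ≤ D⁴(G₉)`. -/

open scoped commutatorElement

section DerivedLength

variable {G : Type*} [Group G]

theorem commutatorElement_mem_derivedSeries_succ {k : ℕ} {a b : G}
    (ha : a ∈ derivedSeries G k) (hb : b ∈ derivedSeries G k) :
    ⁅a, b⁆ ∈ derivedSeries G (k + 1) :=
  Subgroup.commutator_mem_commutator ha hb

theorem derivedLengthEq_succ_iff {d : ℕ} :
    DerivedLengthEq G (d + 1) ↔ derivedSeries G (d + 1) = ⊥ ∧ derivedSeries G d ≠ ⊥ := by
  refine ⟨fun h => ⟨h.1, h.2 d d.lt_succ_self⟩, fun ⟨hbot, hne⟩ => ⟨hbot, fun k hk hk_bot => ?_⟩⟩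
  exact hne (eq_bot_iff.2 (hk_bot ▸ derivedSeries_antitone G (Nat.le_of_lt_succ hk)))

end DerivedLength

namespace SemidirectProduct

variable {N G : Type*} [Group N] [Group G] {φ : G →* MulAut N}

theorem commutatorElement_inl_inr (n : N) (g : G) :
    ⁅(inl n : N ⋊[φ] G), (inr g : N ⋊[φ] G)⁆ = inl (n * φ g n⁻¹) := by
  rw [commutatorElement_def, map_mul, inl_aut, ← map_inv, ← map_inv]
  group

theorem inr_mem_derivedSeries {k : ℕ} {g : G} (hg : g ∈ derivedSeries G k) :
    (inr g : N ⋊[φ] G) ∈ derivedSeries (N ⋊[φ] G) k :=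
  map_derivedSeries_le_derivedSeries inr k (Subgroup.mem_map_of_mem inr hg)

theorem range_inl_le_derivedSeries_succ_of_le {k : ℕ} {g : G} (hg : g ∈ derivedSeries G k)
    (hsurj : Function.Surjective fun n => n * φ g n⁻¹)
    (hk : (inl : N →* N ⋊[φ] G).range ≤ derivedSeries (N ⋊[φ] G) k) :
    (inl : N →* N ⋊[φ] G).range ≤ derivedSeries (N ⋊[φ] G) (k + 1) := by
  rintro _ ⟨n, rfl⟩
  obtain ⟨m, rfl⟩ := hsurj n
  rw [← commutatorElement_inl_inr]
  exact commutatorElement_mem_derivedSeries_succ (hk ⟨m, rfl⟩) (inr_mem_derivedSeries hg)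

theorem range_inl_le_derivedSeries_succ {k : ℕ} {g : G} (hg : g ∈ derivedSeries G k)
    (hsurj : Function.Surjective fun n => n * φ g n⁻¹) :
    (inl : N →* N ⋊[φ] G).range ≤ derivedSeries (N ⋊[φ] G) (k + 1) := by
  suffices ∀ j ≤ k, (inl : N →* N ⋊[φ] G).range ≤ derivedSeries (N ⋊[φ] G) (j + 1) from
    this k le_rfl
  intro j hj
  induction j with
  | zero =>
    exact range_inl_le_derivedSeries_succ_of_le (derivedSeries_antitone G hj hg) hsurj le_top
  | succ j ih =>
    exact range_inl_le_derivedSeries_succ_of_le (derivedSeries_antitone G hj hg) hsurj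
      (ih (by omega))

theorem derivedSeries_succ_eq_bot {N : Type*} [CommGroup N] {φ : G →* MulAut N} {k : ℕ}
    (h : derivedSeries G k = ⊥) : derivedSeries (N ⋊[φ] G) (k + 1) = ⊥ := by
  have hker : derivedSeries (N ⋊[φ] G) k ≤ (inl : N →* N ⋊[φ] G).range := by
    rw [range_inl_eq_ker_rightHom, ← Subgroup.map_eq_bot_iff, eq_bot_iff, ← h]
    exact map_derivedSeries_le_derivedSeries rightHom k
  rw [derivedSeries_succ, eq_bot_iff]
  refine (Subgroup.commutator_mono hker hker).trans ?_
  rw [Subgroup.commutator_le]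
  rintro _ ⟨n, rfl⟩ _ ⟨m, rfl⟩
  rw [Subgroup.mem_bot, commutatorElement_eq_one_iff_commute]
  exact (Commute.all n m).map inl

theorem derivedLengthEq_add_two {N : Type*} [CommGroup N] [Nontrivial N] {φ : G →* MulAut N}
    {k : ℕ} {g : G} (hbot : derivedSeries G (k + 1) = ⊥)
    (hg : g ∈ derivedSeries G k) (hsurj : Function.Surjective fun n => n * φ g n⁻¹) :
    DerivedLengthEq (N ⋊[φ] G) (k + 2) := by
  refine derivedLengthEq_succ_iff.2 ⟨derivedSeries_succ_eq_bot hbot, fun h => ?_⟩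
  obtain ⟨n, hn⟩ := exists_ne (1 : N)
  have hmem := range_inl_le_derivedSeries_succ hg hsurj ⟨n, rfl⟩
  rw [h, Subgroup.mem_bot, ← map_one inl, inl_inj] at hmem
  exact hn hmem

end SemidirectProduct

theorem Matrix.GeneralLinearGroup.val_commutatorElement_of_det_eq_one {n R : Type*}
    [Fintype n] [DecidableEq n] [CommRing R] {g h : GL n R} (hg : g.val.det = 1)
    (hh : h.val.det = 1) :
    (⁅g, h⁆ : GL n R).val = g.val * h.val * g.val.adjugate * h.val.adjugate := by
  have inv_eq_adjugate {x : GL n R} (hx : x.val.det = 1) : (x⁻¹).val = x.val.adjugate :=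
    Units.inv_eq_of_mul_eq_one_right (by rw [Matrix.mul_adjugate, hx, one_smul])
  rw [commutatorElement_def, Units.val_mul, Units.val_mul, Units.val_mul,
    inv_eq_adjugate hg, inv_eq_adjugate hh]

theorem Matrix.GeneralLinearGroup.derivedSeries_one_le_ker_det {n R : Type*} [Fintype n]
    [DecidableEq n] [CommRing R] :
    derivedSeries (GL n R) 1 ≤ (Matrix.GeneralLinearGroup.det : GL n R →* Rˣ).ker := by
  rw [derivedSeries_one]
  exact Abelianization.commutator_subset_ker _

namespace GL2F3

open Matrix.GeneralLinearGroup

local notation "M₂" => Matrix (Fin 2) (Fin 2) (ZMod 3)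
local notation "GL₂" => GL (Fin 2) (ZMod 3)

-- In `SL(2, 𝔽₃)` the traceless matrices are exactly the elements of order 4; with `±1` they form `Q₈`.
def IsQuaternion (a : M₂) : Prop := a.det = 1 ∧ (a = 1 ∨ a = -1 ∨ a.trace = 0)

instance : DecidablePred IsQuaternion := fun a => by unfold IsQuaternion; infer_instance

theorem isQuaternion_mul :
    ∀ a b : M₂, IsQuaternion a → IsQuaternion b → IsQuaternion (a * b) := by
  decide +kernel

theorem isQuaternion_adjugate : ∀ a : M₂, IsQuaternion a → IsQuaternion a.adjugate := by
  decide +kernel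

theorem isQuaternion_commutator : ∀ a b : M₂, a.det = 1 → b.det = 1 →
    IsQuaternion (a * b * a.adjugate * b.adjugate) := by
  decide +kernel

theorem commutator_eq_one_or_neg_one_of_isQuaternion : ∀ a b : M₂,
    IsQuaternion a → IsQuaternion b →
    a * b * a.adjugate * b.adjugate = 1 ∨ a * b * a.adjugate * b.adjugate = -1 := by
  decide +kernel

def quaternionSubgroup : Subgroup GL₂ where
  carrier := {g | IsQuaternion g.val}
  one_mem' := ⟨Matrix.det_one, Or.inl rfl⟩
  mul_mem' ha hb := isQuaternion_mul _ _ ha hb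
  inv_mem' {g} hg := by
    have : (g⁻¹).val = g.val.adjugate :=
      Units.inv_eq_of_mul_eq_one_right (by rw [Matrix.mul_adjugate, hg.1, one_smul])
    show IsQuaternion (g⁻¹).val
    rw [this]
    exact isQuaternion_adjugate _ hg

theorem derivedSeries_two_le_quaternionSubgroup : derivedSeries GL₂ 2 ≤ quaternionSubgroup := by
  rw [derivedSeries_succ, Subgroup.commutator_le]
  intro g hg h hh
  have hg' : g.val.det = 1 := congrArg Units.val (derivedSeries_one_le_ker_det hg)
  have hh' : h.val.det = 1 := congrArg Units.val (derivedSeries_one_le_ker_det hh)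
  show IsQuaternion (⁅g, h⁆ : GL₂).val
  rw [val_commutatorElement_of_det_eq_one hg' hh']
  exact isQuaternion_commutator _ _ hg' hh'

theorem derivedSeries_three_le_center : derivedSeries GL₂ 3 ≤ Subgroup.center GL₂ := by
  rw [derivedSeries_succ, Subgroup.commutator_le]
  intro g hg h hh
  have hg' := derivedSeries_two_le_quaternionSubgroup hg
  have hh' := derivedSeries_two_le_quaternionSubgroup hh
  rw [Subgroup.mem_center_iff]
  intro x
  ext1
  rw [Units.val_mul, Units.val_mul, val_commutatorElement_of_det_eq_one hg'.1 hh'.1]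
  rcases commutator_eq_one_or_neg_one_of_isQuaternion _ _ hg' hh' with h1 | h1 <;> simp [h1]

theorem derivedSeries_four_eq_bot : derivedSeries GL₂ 4 = ⊥ := by
  rw [derivedSeries_succ, Subgroup.commutator_eq_bot_iff_le_centralizer]
  exact derivedSeries_three_le_center.trans
    ((Subgroup.center_le_centralizer _).trans
      (Subgroup.centralizer_le derivedSeries_three_le_center))

theorem neg_one_mem_derivedSeries_three : (-1 : GL₂) ∈ derivedSeries GL₂ 3 := by
  let x₁ : GL₂ := ⟨!![0, 1; 1, 0], !![0, 1; 1, 0], by decide, by decide⟩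
  let x₂ : GL₂ := ⟨!![1, 2; 1, 1], !![2, 2; 1, 2], by decide, by decide⟩
  let x₃ : GL₂ := ⟨!![0, 1; 1, 1], !![2, 1; 1, 0], by decide, by decide⟩
  let x₄ : GL₂ := ⟨!![0, 1; 2, 2], !![2, 2; 1, 0], by decide, by decide⟩
  have hD1 (y : GL₂) : ⁅x₁, y⁆ ∈ derivedSeries GL₂ 1 :=
    commutatorElement_mem_derivedSeries_succ (Subgroup.mem_top _) (Subgroup.mem_top _)
  have h : (-1 : GL₂) = ⁅⁅⁅x₁, x₂⁆, ⁅x₁, x₃⁆⁆, ⁅⁅x₁, x₂⁆, ⁅x₁, x₄⁆⁆⁆ :=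
    Units.ext (by decide +kernel)
  rw [h]
  exact commutatorElement_mem_derivedSeries_succ
    (commutatorElement_mem_derivedSeries_succ (hD1 _) (hD1 _))
    (commutatorElement_mem_derivedSeries_succ (hD1 _) (hD1 _))

end GL2F3

theorem glAction_neg_one (n : Multiplicative (Fin 2 → ZMod 3)) : glAction (-1) n = n⁻¹ := by
  change Multiplicative.ofAdd ((-1 : Matrix (Fin 2) (Fin 2) (ZMod 3)).mulVec n.toAdd) = n⁻¹
  rw [Matrix.neg_mulVec, Matrix.one_mulVec]
  rfl

theorem surjective_mul_glAction_neg_one_inv :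
    Function.Surjective fun n : Multiplicative (Fin 2 → ZMod 3) => n * glAction (-1) n⁻¹ := by
  intro n
  refine ⟨n * n, ?_⟩
  simp only [glAction_neg_one, inv_inv]
  decide +revert

/-- The group `G₉ = F₃² ⋊ GL(2, F₃)` has order `432` and derived length exactly `5`
(hence composition length `Ω(432) = 7`). -/
theorem G_nine_card_and_derived_length :
    Nat.card G₉ = 432 ∧ DerivedLengthEq G₉ 5 ∧ Omega (Nat.card G₉) = 7 := by
  have hcard : Nat.card G₉ = 432 := by
    rw [SemidirectProduct.card, Nat.card_eq_fintype_card, Matrix.card_GL_field]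
    decide
  refine ⟨hcard, ?_, ?_⟩
  · exact SemidirectProduct.derivedLengthEq_add_two GL2F3.derivedSeries_four_eq_bot
      GL2F3.neg_one_mem_derivedSeries_three surjective_mul_glAction_neg_one_inv
  · rw [hcard]
    simp [Omega]
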